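/- Every ℓ-worm □p_δ^ℓ is an interval in ℝ²: it is nonempty, connected, and for all u ≤ v ≤ w with u, w ∈ □p_δ^ℓ one has v ∈ □p_δ^ℓ, where ≤ denotes the coordinatewise partial order on ℝ². -/
import Mathlib


open scoped ENNReal NNReal

noncomputable section

/-- The δ-square centered at `p` with respect to the ∞-norm (the `Prod` norm on `ℝ × ℝ`). -/
def square (p : ℝ × ℝ) (δ : ℝ) : Set (ℝ × ℝ) := {w | ‖p - w‖ ≤ δ}

/-- The ℓ-worm centered at `p` of width `δ`: union of δ-squares centered at
`p + α • (1, -1)` for `|α| ≤ (ℓ - 1) * δ`. -/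
def worm (p : ℝ × ℝ) (δ : ℝ) (ℓ : ℕ) : Set (ℝ × ℝ) :=
  ⋃ α ∈ {a : ℝ | |a| ≤ ((ℓ : ℝ) - 1) * δ}, square (p.1 + α, p.2 - α) δ

/-- An interval in `ℝ²`: nonempty, connected, and closed under coordinatewise betweenness. -/
def IsInterval (I : Set (ℝ × ℝ)) : Prop :=
  I.Nonempty ∧ IsConnected I ∧
    ∀ u v w : ℝ × ℝ, u ≤ v → v ≤ w → u ∈ I → w ∈ I → v ∈ I

/-- The ε-extension of a set `I ⊆ ℝ²`. -/
def extension (I : Set (ℝ × ℝ)) (ε : ℝ) : Set (ℝ × ℝ) := ⋃ x ∈ I, square x ε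

/-- `rk` is antitone with respect to containment on the collection of worms. -/
def AntitoneOnWorms (rk : Set (ℝ × ℝ) → ℕ) : Prop :=
  ∀ (p q : ℝ × ℝ) (δ δ' : ℝ) (ℓ ℓ' : ℕ), 0 < δ → 0 < δ' → 1 ≤ ℓ → 1 ≤ ℓ' →
    worm p δ ℓ ⊆ worm q δ' ℓ' → rk (worm q δ' ℓ') ≤ rk (worm p δ ℓ)

/-- The GRIL landscape value, as a real number (`sSup ∅ = 0` by convention in `ℝ`). -/
def gril (rk : Set (ℝ × ℝ) → ℕ) (p : ℝ × ℝ) (k ℓ : ℕ) : ℝ :=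
  sSup {δ : ℝ | 0 ≤ δ ∧ k ≤ rk (worm p δ ℓ)}

/-- The GRIL landscape value, as an extended nonnegative real (`sup ∅ = 0`). -/
def grilE (rk : Set (ℝ × ℝ) → ℕ) (p : ℝ × ℝ) (k ℓ : ℕ) : ℝ≥0∞ :=
  ⨆ δ ∈ {δ : ℝ | 0 ≤ δ ∧ k ≤ rk (worm p δ ℓ)}, ENNReal.ofReal δ

lemma mem_worm_iff (p : ℝ × ℝ) (δ : ℝ) (ℓ : ℕ) (w : ℝ × ℝ) :
    w ∈ worm p δ ℓ ↔ ∃ α : ℝ, |α| ≤ ((ℓ:ℝ)-1)*δ ∧ |p.1 + α - w.1| ≤ δ ∧ |p.2 - α - w.2| ≤ δ := by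
  simp only [worm, square, Set.mem_iUnion, Set.mem_setOf_eq, Prod.norm_def, Real.norm_eq_abs,
    max_le_iff, Prod.fst_sub, Prod.snd_sub, exists_prop]


lemma worm_eq (p : ℝ × ℝ) (δ : ℝ) (hδ : 0 < δ) (ℓ : ℕ) (hℓ : 1 ≤ ℓ) :
    worm p δ ℓ = {w : ℝ × ℝ | |w.1 - p.1| ≤ ((ℓ:ℝ)-1)*δ + δ ∧ |w.2 - p.2| ≤ ((ℓ:ℝ)-1)*δ + δ ∧
      |(w.1 - p.1) + (w.2 - p.2)| ≤ 2*δ} := by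
  have hL : 0 ≤ ((ℓ:ℝ)-1)*δ := by
    have : (1:ℝ) ≤ ℓ := by exact_mod_cast hℓ
    nlinarith
  ext w
  rw [mem_worm_iff]
  set L := ((ℓ:ℝ)-1)*δ with hLdef
  constructor
  · rintro ⟨α, h1, h2, h3⟩
    rw [abs_le] at h1 h2 h3
    refine ⟨?_, ?_, ?_⟩ <;> rw [abs_le] <;> constructor <;> linarith [h1.1, h1.2, h2.1, h2.2, h3.1, h3.2]
  · rintro ⟨h1, h2, h3⟩
    rw [abs_le] at h1 h2 h3
    set a := w.1 - p.1 with hadef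
    set b := w.2 - p.2 with hbdef
    refine ⟨max (max (-L) (a - δ)) (-b - δ), ?_, ?_, ?_⟩
    · rw [abs_le]
      constructor
      · exact le_trans (le_max_left _ _) (le_max_left _ _)
      · simp only [max_le_iff]
        refine ⟨⟨by linarith, by linarith [h1.2]⟩, by linarith [h2.2]⟩
    · rw [abs_le]
      have h4 : max (max (-L) (a - δ)) (-b - δ) ≤ a + δ := by
        simp only [max_le_iff]
        exact ⟨⟨by linarith [h1.1], by linarith⟩, by linarith [h3.1]⟩
      have h5 : a - δ ≤ max (max (-L) (a - δ)) (-b - δ) :=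
        le_trans (le_max_right _ _) (le_max_left _ _)
      constructor <;> linarith
    · rw [abs_le]
      have h4 : max (max (-L) (a - δ)) (-b - δ) ≤ -b + δ := by
        simp only [max_le_iff]
        exact ⟨⟨by linarith [h2.1], by linarith [h3.2]⟩, by linarith⟩
      have h5 : -b - δ ≤ max (max (-L) (a - δ)) (-b - δ) := le_max_right _ _
      constructor <;> linarith

lemma convex_combo_abs_le {a b x y c : ℝ} (ha : 0 ≤ a) (hb : 0 ≤ b) (hab : a + b = 1)
    (hx : |x| ≤ c) (hy : |y| ≤ c) : |a*x + b*y| ≤ c := by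
  calc |a*x + b*y| ≤ |a*x| + |b*y| := abs_add_le _ _
    _ = a*|x| + b*|y| := by rw [abs_mul, abs_mul, abs_of_nonneg ha, abs_of_nonneg hb]
    _ ≤ a*c + b*c := by
        have := abs_nonneg x; nlinarith
    _ = c := by rw [← add_mul, hab, one_mul]

/-- every ℓ-worm is an interval in ℝ². -/
theorem worm_isInterval (p : ℝ × ℝ) (δ : ℝ) (hδ : 0 < δ) (ℓ : ℕ) (hℓ : 1 ≤ ℓ) :
    IsInterval (worm p δ ℓ) := by
  have hL : 0 ≤ ((ℓ:ℝ)-1)*δ := by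
    have : (1:ℝ) ≤ ℓ := by exact_mod_cast hℓ
    nlinarith
  rw [worm_eq p δ hδ ℓ hℓ]
  set L := ((ℓ:ℝ)-1)*δ with hLdef
  refine ⟨⟨p, ?_⟩, ?_, ?_⟩
  · simp only [Set.mem_setOf_eq, sub_self, abs_zero, add_zero]
    exact ⟨by linarith, by linarith, by linarith⟩
  · have hconv : Convex ℝ {w : ℝ × ℝ | |w.1 - p.1| ≤ L + δ ∧ |w.2 - p.2| ≤ L + δ ∧
        |(w.1 - p.1) + (w.2 - p.2)| ≤ 2*δ} := by
      intro x hx y hy a b ha hb hab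
      obtain ⟨hx1, hx2, hx3⟩ := hx
      obtain ⟨hy1, hy2, hy3⟩ := hy
      have e1 : (a • x + b • y).1 - p.1 = a*(x.1 - p.1) + b*(y.1 - p.1) := by
        have h : (a • x + b • y).1 = a*x.1 + b*y.1 := rfl
        rw [h]; linear_combination p.1 * hab
      have e2 : (a • x + b • y).2 - p.2 = a*(x.2 - p.2) + b*(y.2 - p.2) := by
        have h : (a • x + b • y).2 = a*x.2 + b*y.2 := rfl
        rw [h]; linear_combination p.2 * hab
      simp only [Set.mem_setOf_eq]
      refine ⟨?_, ?_, ?_⟩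
      · rw [e1]; exact convex_combo_abs_le ha hb hab hx1 hy1
      · rw [e2]; exact convex_combo_abs_le ha hb hab hx2 hy2
      · rw [e1, e2]
        have : a*(x.1 - p.1) + b*(y.1 - p.1) + (a*(x.2 - p.2) + b*(y.2 - p.2))
            = a*((x.1 - p.1) + (x.2 - p.2)) + b*((y.1 - p.1) + (y.2 - p.2)) := by ring
        rw [this]; exact convex_combo_abs_le ha hb hab hx3 hy3
    refine ⟨⟨p, ?_⟩, hconv.isPreconnected⟩
    simp only [Set.mem_setOf_eq, sub_self, abs_zero, add_zero]
    exact ⟨by linarith, by linarith, by linarith⟩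
  · rintro u v w ⟨huv1, huv2⟩ ⟨hvw1, hvw2⟩ ⟨hu1, hu2, hu3⟩ ⟨hw1, hw2, hw3⟩
    rw [abs_le] at hu1 hu2 hu3 hw1 hw2 hw3
    refine ⟨?_, ?_, ?_⟩ <;> rw [abs_le] <;> constructor <;>
      linarith [hu1.1, hu1.2, hu2.1, hu2.2, hu3.1, hu3.2, hw1.1, hw1.2, hw2.1, hw2.2, hw3.1, hw3.2]
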